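/- Let w be a word over the alphabet {a, ā, b, b̄}. If for every normal subgroup U of finite index in the free group F on the four free generators a, ā, b, b̄ there exists a word w' in the one-sided Dyck language D'₂* whose image in F lies in the same coset of U as the image of w, then w belongs to the two-sided Dyck language D₂*. That is, the closure of D'₂* in the free monoid M (in the topology induced from the profinite topology on F) is contained in D₂*. -/

import Mathlib

/-- The four-letter alphabet `{a, ā, b, b̄}`. -/
inductive Letter : Type
  | a | abar | b | bbar
  deriving DecidableEq

/-- The "formal inverse" letter: `a ↦ ā`, `ā ↦ a`, `b ↦ b̄`, `b̄ ↦ b`. -/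
def Letter.bar : Letter → Letter
  | .a => .abar
  | .abar => .a
  | .b => .bbar
  | .bbar => .b

/-- The free monoid `M` on the four letters. -/
abbrev M : Type := FreeMonoid Letter

/-- The free group `F` on the four free generators. -/
abbrev F : Type := FreeGroup Letter

/-- The canonical embedding `M → F`. -/
def emb : M →* F := FreeMonoid.lift (FreeGroup.of : Letter → F)

/-- The one-sided (restricted) Dyck language `D'₂*`: the smallest subset of `M`
containing the empty word, closed under concatenation and under
`w ↦ a·w·ā` and `w ↦ b·w·b̄`. -/
inductive OneDyck : M → Prop
  | empty : OneDyck 1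
  | mul {u v : M} : OneDyck u → OneDyck v → OneDyck (u * v)
  | brA {u : M} : OneDyck u →
      OneDyck (FreeMonoid.of Letter.a * u * FreeMonoid.of Letter.abar)
  | brB {u : M} : OneDyck u →
      OneDyck (FreeMonoid.of Letter.b * u * FreeMonoid.of Letter.bbar)

/-- One reduction step: deletion of an adjacent two-letter factor
`aā`, `āa`, `bb̄` or `b̄b`. -/
inductive PairDeletion : M → M → Prop
  | step (u v : M) (l : Letter) :
      PairDeletion (u * FreeMonoid.of l * FreeMonoid.of l.bar * v) (u * v)

/-- The two-sided (unrestricted) Dyck language `D₂*`: words reducing to the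
empty word by successive deletions of adjacent factors `aā`, `āa`, `bb̄`, `b̄b`. -/
def TwoDyck (w : M) : Prop := Relation.ReflTransGen PairDeletion w 1

/-- The two generators `x, y` of `F₂`. -/
inductive Gen : Type
  | x | y
  deriving DecidableEq

/-- The free group `F₂` on the two free generators `x, y`. -/
abbrev F₂ : Type := FreeGroup Gen

/-- The homomorphism `φ : F → F₂` with `φ(a) = x`, `φ(ā) = x⁻¹`,
`φ(b) = y`, `φ(b̄) = y⁻¹`. -/
def phi : F →* F₂ := FreeGroup.lift fun l => match l with
  | .a => FreeGroup.of Gen.x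
  | .abar => (FreeGroup.of Gen.x)⁻¹
  | .b => FreeGroup.of Gen.y
  | .bbar => (FreeGroup.of Gen.y)⁻¹

/-!
Every word of `D'₂*` maps to `1` under `φ ∘ emb : M → F₂`, and a word `w` with
`φ (emb w) = 1` lies in `D₂*`, since free reduction of `φ (emb w)` to the empty word is pair
deletion in `w`. If `w` is in the closure of `D'₂*`, then `φ (emb w)` lies in every
finite-index normal subgroup of `F₂` (pull it back along `φ`), so it is `1` because free groups
are residually finite.

Residual finiteness: for `g ≠ 1` let `S` be the finite set of elements spelled by the suffixes
of a word spelling `g`. Left multiplication by a generator `x` is injective, so its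
restriction to `S ∩ x⁻¹S` extends to a permutation `σₓ` of `S`. In the resulting finite
permutation representation, `g` moves the point `1 ∈ S` along its suffixes to `g ≠ 1`.
-/

theorem Set.InjOn.exists_perm_eqOn {α : Type*} [Finite α] {s : Set α} {f : α → α}
    (hf : Set.InjOn f s) : ∃ σ : Equiv.Perm α, Set.EqOn σ f s := by
  have := Fintype.ofFinite α
  obtain ⟨g, hg⟩ := Set.MapsTo.exists_equiv_extend_of_card_eq (t := (Finset.univ : Finset α))
    Finset.card_univ.symm (fun _ _ => Finset.mem_coe.mpr (Finset.mem_univ _)) hf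
  exact ⟨g.trans (Equiv.subtypeUnivEquiv Finset.mem_univ), hg⟩

theorem exists_perm_extend_mul_left {G : Type*} [Group G] (S : Set G) [Finite S] (g : G) :
    ∃ σ : Equiv.Perm S, ∀ (s : S) (hs : g * s ∈ S), σ s = ⟨g * s, hs⟩ := by
  classical
  let f : S → S := fun s => if hs : g * s ∈ S then ⟨g * s, hs⟩ else s
  have hf : Set.InjOn f {s | g * s ∈ S} := by
    intro s hs t ht hst
    simp only [Set.mem_ofPred_eq] at hs ht
    exact Subtype.ext (by simpa [f, hs, ht] using hst)
  obtain ⟨σ, hσ⟩ := hf.exists_perm_eqOn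
  exact ⟨σ, fun s hs => by simp [hσ hs, f, hs]⟩

namespace FreeGroup

variable {α : Type*}

theorem lift_mk_apply_one {S : Set (FreeGroup α)} {σ : α → Equiv.Perm S}
    (hσ : ∀ (x : α) (s : S) (hs : of x * s ∈ S), σ x s = ⟨of x * s, hs⟩)
    {L : List (α × Bool)} (hL : ∀ l, l <:+ L → mk l ∈ S) :
    (lift σ (mk L) ⟨1, hL [] L.nil_suffix⟩ : FreeGroup α) = mk L := by
  induction L with
  | nil => rfl
  | cons t L ih =>
    obtain ⟨x, b⟩ := t
    have hmem : mk ((x, b) :: L) ∈ S := hL _ List.suffix_rfl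
    specialize ih fun l hl => hL l (hl.trans (List.suffix_cons _ _))
    set p := lift σ (mk L) ⟨1, hL [] List.nil_suffix⟩
    rw [show mk ((x, b) :: L) = mk [(x, b)] * mk L from rfl, _root_.map_mul, Equiv.Perm.mul_apply]
    cases b with
    | true =>
      change ((σ x) p : FreeGroup α) = of x * mk L
      rw [hσ x p (by rw [ih]; exact hmem)]
      exact congrArg _ ih
    | false =>
      let q : S := ⟨(of x)⁻¹ * mk L, hmem⟩
      have hq : σ x q = p := by
        rw [hσ x q (by simp [q, ← ih])]
        exact Subtype.ext (by simp [q, ih])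
      change ((σ x)⁻¹ p : FreeGroup α) = (of x)⁻¹ * mk L
      rw [Equiv.Perm.inv_eq_iff_eq.mpr hq.symm]

instance : Group.ResiduallyFinite (FreeGroup α) := by
  classical
  refine Group.residuallyFinite_of_forall_exists_finite_monoidHom fun g hg => ?_
  let S : Set (FreeGroup α) := mk '' {l | l ∈ g.toWord.tails}
  have : Finite S := ((List.finite_toSet _).image _).to_subtype
  choose σ hσ using fun x : α => exists_perm_extend_mul_left S (of x)
  have hg' := lift_mk_apply_one hσ (L := g.toWord) fun l hl =>
    ⟨l, (List.mem_tails _ _).mpr hl, rfl⟩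
  refine ⟨Equiv.Perm S, inferInstance, inferInstance, lift σ, fun h => hg ?_⟩
  simpa [mk_toWord, h] using hg'.symm

theorem red_nil_of_mk_eq_one {L : List (α × Bool)} (h : mk L = 1) : Red L [] := by
  obtain ⟨L', hL, hnil⟩ := Red.exact.mp (h.trans one_eq_mk)
  rwa [Red.nil_iff.mp hnil] at hL

end FreeGroup

def letterEquiv : Letter ≃ Gen × Bool where
  toFun
    | .a => (.x, true)
    | .abar => (.x, false)
    | .b => (.y, true)
    | .bbar => (.y, false)
  invFun
    | (.x, true) => .a
    | (.x, false) => .abar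
    | (.y, true) => .b
    | (.y, false) => .bbar
  left_inv l := by cases l <;> rfl
  right_inv p := by obtain ⟨_ | _, _ | _⟩ := p <;> rfl

theorem letterEquiv_symm_not (g : Gen) (b : Bool) :
    letterEquiv.symm (g, !b) = (letterEquiv.symm (g, b)).bar := by
  cases g <;> cases b <;> rfl

theorem phi_emb_eq_mk (w : M) : phi (emb w) = FreeGroup.mk (w.toList.map letterEquiv) := by
  induction w using FreeMonoid.inductionOn' with
  | one => rfl
  | of_mul l w ih =>
    rw [map_mul, map_mul, ih]
    cases l <;> rfl

theorem OneDyck.phi_emb_eq_one {w : M} (hw : OneDyck w) : phi (emb w) = 1 := by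
  induction hw with
  | empty => simp
  | mul _ _ ihu ihv => simp [ihu, ihv]
  | brA _ ih | brB _ ih =>
    simp only [map_mul, ih, mul_one]
    simp [phi, emb]

def ofGenBoolWord (L : List (Gen × Bool)) : M := FreeMonoid.ofList (L.map letterEquiv.symm)

theorem pairDeletion_of_red_step {L₁ L₂ : List (Gen × Bool)} (h : FreeGroup.Red.Step L₁ L₂) :
    PairDeletion (ofGenBoolWord L₁) (ofGenBoolWord L₂) := by
  cases h with | @not L₁ L₂ g b =>
  convert PairDeletion.step (ofGenBoolWord L₁) (ofGenBoolWord L₂) (letterEquiv.symm (g, b))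
    using 1
  all_goals simp [ofGenBoolWord, letterEquiv_symm_not, mul_assoc]

theorem twoDyck_of_phi_emb_eq_one {w : M} (h : phi (emb w) = 1) : TwoDyck w := by
  have hred := FreeGroup.red_nil_of_mk_eq_one ((phi_emb_eq_mk w).symm.trans h)
  simpa [TwoDyck, Function.onFun, ofGenBoolWord, List.map_map] using
    hred.lift ofGenBoolWord fun _ _ => pairDeletion_of_red_step

/-- The closure of the one-sided Dyck language `D'₂*` in `M`, in the topology
induced from the profinite topology on `F`, is contained in the two-sided Dyck
language `D₂*`. -/
theorem closure_oneDyck_subset_twoDyck (w : M)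
    (h : ∀ U : Subgroup F, U.Normal → U.FiniteIndex →
        ∃ w' : M, OneDyck w' ∧ (emb w)⁻¹ * emb w' ∈ U) :
    TwoDyck w := by
  refine twoDyck_of_phi_emb_eq_one
    (Group.eq_one_iff_forall_finiteIndexNormalSubroup _ fun H => ?_)
  let U := FiniteIndexNormalSubgroup.comap phi H
  obtain ⟨w', hw', hmem⟩ := h U.toSubgroup U.isNormal' U.isFiniteIndex'
  simpa [U, FiniteIndexNormalSubgroup.toSubgroup_comap,
    FiniteIndexNormalSubgroup.mem_toSubgroup_iff, hw'.phi_emb_eq_one] using hmem
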